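/- arXiv:1805.11245 — 3 statements merged into one kernel-verified Lean document; each statement's English description precedes it below -/
import Mathlib

section
/- For a nonsingular matrix A ∈ K(t)^{n×n} (K a field), there exist biproper matrices S, T (matrices over K(t)⁻ invertible over K(t)⁻) and a nonincreasing integer vector α ∈ ℤⁿ such that S A T = diag(t^{α_1}, …, t^{α_n}). Moreover, α_k = δ_k − δ_{k−1}, where δ_k is the maximum degree of the determinant of a k×k submatrix of A and δ_0 = 0. -/
/-- The degree of a rational function, with `deg 0 = ⊥` (i.e. `-∞`). -/
noncomputable def degBot {K : Type*} [Field K] (f : RatFunc K) : WithBot ℤ := by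
  classical exact if f = 0 then ⊥ else (f.intDegree : WithBot ℤ)

/-- `deltaMinor A k` is the maximum degree of the determinant of a `k × k` submatrix of
`A` (which is `0` for `k = 0`, the empty determinant being `1`). -/
noncomputable def deltaMinor {K : Type*} [Field K] {n : ℕ}
    (A : Matrix (Fin n) (Fin n) (RatFunc K)) (k : ℕ) : WithBot ℤ :=
  Finset.univ.sup fun p : (Fin k ↪ Fin n) × (Fin k ↪ Fin n) =>
    degBot (A.submatrix p.1 p.2).det

/-!
Gaussian elimination over the valuation ring `K(t)⁻`. Pivoting on an entry of maximal degree
makes every elimination multiplier `-a / p` proper, so the eliminating transvections (and the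
permutations bringing the pivot into place) are biproper; by induction on the size every matrix
is biproper equivalent to a diagonal one. A nonzero diagonal entry `d` differs from `t ^ deg d`
by the unit `t ^ deg d / d` of `K(t)⁻`, and permuting the diagonal sorts the exponents.

For the degrees of minors, expanding a minor of `S * A` along the rows of `S` writes it as a
combination, with proper coefficients, of minors of `A` of the same size; hence multiplying by a
proper matrix cannot raise `δ_k`, and `δ_k` is an invariant of biproper equivalence. For
`diag(t^{α_1}, …, t^{α_n})` with `α` nonincreasing the largest `k × k` minor is the leading
one, so `δ_k = α_1 + ⋯ + α_k`.
-/

section DegBot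

variable {K : Type*} [Field K]

@[simp] lemma degBot_zero : degBot (0 : RatFunc K) = ⊥ := by simp [degBot]

lemma degBot_of_ne_zero {f : RatFunc K} (hf : f ≠ 0) : degBot f = f.intDegree := by
  simp [degBot, hf]

@[simp] lemma degBot_eq_bot_iff {f : RatFunc K} : degBot f = ⊥ ↔ f = 0 := by
  by_cases hf : f = 0 <;> simp [degBot, hf]

@[simp] lemma degBot_one : degBot (1 : RatFunc K) = 0 := by
  simp [degBot_of_ne_zero]

@[simp] lemma degBot_neg (f : RatFunc K) : degBot (-f) = degBot f := by
  by_cases hf : f = 0 <;> simp [degBot, hf]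

lemma degBot_mul (f g : RatFunc K) : degBot (f * g) = degBot f + degBot g := by
  rcases eq_or_ne f 0 with rfl | hf
  · simp
  rcases eq_or_ne g 0 with rfl | hg
  · simp
  simp [degBot_of_ne_zero, hf, hg, RatFunc.intDegree_mul hf hg]

lemma degBot_add_le (f g : RatFunc K) : degBot (f + g) ≤ max (degBot f) (degBot g) := by
  rcases eq_or_ne (f + g) 0 with hfg | hfg
  · simp [hfg]
  rcases eq_or_ne g 0 with rfl | hg
  · simp
  rcases eq_or_ne f 0 with rfl | hf
  · simp
  simp only [degBot_of_ne_zero, hf, hg, hfg, ne_eq, not_false_eq_true]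
  exact_mod_cast RatFunc.intDegree_add_le hg hfg

lemma degBot_sum_le {ι : Type*} (s : Finset ι) (f : ι → RatFunc K) {b : WithBot ℤ}
    (h : ∀ i ∈ s, degBot (f i) ≤ b) : degBot (∑ i ∈ s, f i) ≤ b :=
  Finset.sum_induction f (degBot · ≤ b)
    (fun x y hx hy => (degBot_add_le x y).trans (max_le hx hy)) (by simp) h

lemma degBot_prod {ι : Type*} (s : Finset ι) (f : ι → RatFunc K) :
    degBot (∏ i ∈ s, f i) = ∑ i ∈ s, degBot (f i) := by
  classical
  induction s using Finset.induction_on with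
  | empty => simp
  | insert a s ha ih => rw [Finset.prod_insert ha, Finset.sum_insert ha, degBot_mul, ih]

lemma degBot_X_zpow (z : ℤ) : degBot ((RatFunc.X : RatFunc K) ^ z) = z := by
  have hpow (m : ℕ) : ((RatFunc.X : RatFunc K) ^ m).intDegree = m := by
    rw [← RatFunc.algebraMap_X, ← map_pow, RatFunc.intDegree_polynomial,
      Polynomial.natDegree_X_pow]
  rw [degBot_of_ne_zero (zpow_ne_zero z RatFunc.X_ne_zero)]
  obtain ⟨m, rfl | rfl⟩ := Int.eq_nat_or_neg z <;> simp [hpow, RatFunc.intDegree_inv]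

end DegBot

/-- The ring `K(t)⁻` of proper rational functions. -/
def properSubring (K : Type*) [Field K] : Subring (RatFunc K) where
  carrier := {f | degBot f ≤ 0}
  mul_mem' {f g} hf hg := by simpa [degBot_mul] using add_nonpos hf hg
  one_mem' := by simp
  add_mem' hf hg := (degBot_add_le _ _).trans (max_le hf hg)
  zero_mem' := by simp
  neg_mem' := by simp

lemma mem_properSubring {K : Type*} [Field K] {f : RatFunc K} :
    f ∈ properSubring K ↔ degBot f ≤ 0 := Iff.rfl

lemma div_mem_properSubring {K : Type*} [Field K] {f g : RatFunc K} (hg : g ≠ 0)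
    (h : degBot f ≤ degBot g) : f / g ∈ properSubring K := by
  rcases eq_or_ne f 0 with rfl | hf
  · simp
  rw [degBot_of_ne_zero hf, degBot_of_ne_zero hg, WithBot.coe_le_coe] at h
  rw [mem_properSubring, degBot_of_ne_zero (div_ne_zero hf hg), RatFunc.intDegree_div hf hg]
  exact_mod_cast Int.sub_nonpos_of_le h

namespace Matrix

variable {K : Type*} [Field K] {ι κ μ ν : Type*}

def IsProper (M : Matrix ι κ (RatFunc K)) : Prop := ∀ i j, M i j ∈ properSubring K

lemma IsProper.submatrix {M : Matrix ι κ (RatFunc K)} (hM : M.IsProper) (e : μ → ι)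
    (f : ν → κ) : (M.submatrix e f).IsProper :=
  fun i j => hM (e i) (f j)

lemma IsProper.transpose {M : Matrix ι κ (RatFunc K)} (hM : M.IsProper) : Mᵀ.IsProper :=
  fun i j => hM j i

lemma IsProper.mul [Fintype κ] {M : Matrix ι κ (RatFunc K)} {N : Matrix κ μ (RatFunc K)}
    (hM : M.IsProper) (hN : N.IsProper) : (M * N).IsProper :=
  fun i j => Subring.sum_mem _ fun k _ => mul_mem (hM i k) (hN k j)

lemma IsProper.add {M N : Matrix ι κ (RatFunc K)} (hM : M.IsProper) (hN : N.IsProper) :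
    (M + N).IsProper :=
  fun i j => add_mem (hM i j) (hN i j)

lemma IsProper.fromBlocks_zero {A : Matrix ι ι (RatFunc K)} {D : Matrix κ κ (RatFunc K)}
    (hA : A.IsProper) (hD : D.IsProper) : (fromBlocks A 0 0 D).IsProper := by
  rintro (i | i) (j | j)
  exacts [hA i j, zero_mem _, zero_mem _, hD i j]

lemma isProper_diagonal [DecidableEq ι] {d : ι → RatFunc K}
    (hd : ∀ i, d i ∈ properSubring K) : (diagonal d).IsProper := by
  intro i j
  rw [diagonal_apply]
  split_ifs
  exacts [hd i, zero_mem _]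

lemma isProper_one [DecidableEq ι] : (1 : Matrix ι ι (RatFunc K)).IsProper :=
  isProper_diagonal fun _ => one_mem _

lemma isProper_single [DecidableEq ι] [DecidableEq κ] (i : ι) (j : κ) {c : RatFunc K}
    (hc : c ∈ properSubring K) : (single i j c).IsProper := by
  intro a b
  rw [single_apply]
  split_ifs
  exacts [hc, zero_mem _]

def IsBiproper [Fintype ι] [DecidableEq ι] (M : Matrix ι ι (RatFunc K)) : Prop :=
  M.IsProper ∧ ∃ M' : Matrix ι ι (RatFunc K), M'.IsProper ∧ M * M' = 1 ∧ M' * M = 1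

section Biproper

variable [Fintype ι] [DecidableEq ι] [Fintype κ] [DecidableEq κ]

lemma isBiproper_one : (1 : Matrix ι ι (RatFunc K)).IsBiproper :=
  ⟨isProper_one, 1, isProper_one, mul_one 1, mul_one 1⟩

lemma IsBiproper.mul {M N : Matrix ι ι (RatFunc K)} (hM : M.IsBiproper) (hN : N.IsBiproper) :
    (M * N).IsBiproper := by
  obtain ⟨hM, M', hM', hMM', hM'M⟩ := hM
  obtain ⟨hN, N', hN', hNN', hN'N⟩ := hN
  refine ⟨hM.mul hN, N' * M', hN'.mul hM', ?_, ?_⟩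
  · rw [Matrix.mul_assoc, ← Matrix.mul_assoc N, hNN', Matrix.one_mul, hMM']
  · rw [Matrix.mul_assoc, ← Matrix.mul_assoc M', hM'M, Matrix.one_mul, hN'N]

lemma isBiproper_list_prod {l : List (Matrix ι ι (RatFunc K))} (hl : ∀ M ∈ l, M.IsBiproper) :
    l.prod.IsBiproper :=
  List.prod_induction _ (fun _ _ => IsBiproper.mul) isBiproper_one hl

lemma IsBiproper.submatrix {M : Matrix ι ι (RatFunc K)} (hM : M.IsBiproper) (e f : κ ≃ ι) :
    (M.submatrix e f).IsBiproper := by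
  obtain ⟨hM, M', hM', hMM', hM'M⟩ := hM
  exact ⟨hM.submatrix e f, M'.submatrix f e, hM'.submatrix f e,
    by simp [hMM', submatrix_one_equiv], by simp [hM'M, submatrix_one_equiv]⟩

lemma IsBiproper.fromBlocks_zero {A : Matrix ι ι (RatFunc K)} {D : Matrix κ κ (RatFunc K)}
    (hA : A.IsBiproper) (hD : D.IsBiproper) : (fromBlocks A 0 0 D).IsBiproper := by
  obtain ⟨hA, A', hA', hAA', hA'A⟩ := hA
  obtain ⟨hD, D', hD', hDD', hD'D⟩ := hD
  exact ⟨hA.fromBlocks_zero hD, fromBlocks A' 0 0 D', hA'.fromBlocks_zero hD',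
    by simp [fromBlocks_multiply, hAA', hDD'], by simp [fromBlocks_multiply, hA'A, hD'D]⟩

lemma isBiproper_diagonal {u : ι → RatFunc K} (hu : ∀ i, u i ≠ 0)
    (hmem : ∀ i, u i ∈ properSubring K) (hmem_inv : ∀ i, (u i)⁻¹ ∈ properSubring K) :
    (diagonal u).IsBiproper :=
  ⟨isProper_diagonal hmem, diagonal fun i => (u i)⁻¹, isProper_diagonal hmem_inv,
    by simp [hu], by simp [hu]⟩

lemma isBiproper_transvection {i j : ι} (hij : i ≠ j) {c : RatFunc K}
    (hc : c ∈ properSubring K) : (transvection i j c).IsBiproper :=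
  ⟨isProper_one.add (isProper_single i j hc), transvection i j (-c),
    isProper_one.add (isProper_single i j (neg_mem hc)),
    by simp [transvection_mul_transvection_same _ _ hij],
    by simp [transvection_mul_transvection_same _ _ hij]⟩

lemma IsBiproper.det_ne_zero {M : Matrix ι ι (RatFunc K)} (hM : M.IsBiproper) : M.det ≠ 0 :=
  have ⟨_, _, _, hMM', _⟩ := hM
  det_ne_zero_of_right_inverse hMM'

end Biproper

section BiproperEquivalent

variable [Fintype ι] [DecidableEq ι] [Fintype κ] [DecidableEq κ]

def BiproperEquivalent (A B : Matrix ι ι (RatFunc K)) : Prop :=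
  ∃ S T : Matrix ι ι (RatFunc K), S.IsBiproper ∧ T.IsBiproper ∧ S * A * T = B

namespace BiproperEquivalent

lemma refl (A : Matrix ι ι (RatFunc K)) : BiproperEquivalent A A :=
  ⟨1, 1, isBiproper_one, isBiproper_one, by simp⟩

lemma trans {A B C : Matrix ι ι (RatFunc K)} (hAB : BiproperEquivalent A B)
    (hBC : BiproperEquivalent B C) : BiproperEquivalent A C := by
  obtain ⟨S, T, hS, hT, rfl⟩ := hAB
  obtain ⟨S', T', hS', hT', rfl⟩ := hBC
  exact ⟨S' * S, T * T', hS'.mul hS, hT.mul hT', by simp only [Matrix.mul_assoc]⟩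

lemma symm {A B : Matrix ι ι (RatFunc K)} (h : BiproperEquivalent A B) :
    BiproperEquivalent B A := by
  obtain ⟨S, T, hS, hT, rfl⟩ := h
  obtain ⟨hSp, S', hS', hSS', hS'S⟩ := id hS
  obtain ⟨hTp, T', hT', hTT', hT'T⟩ := id hT
  refine ⟨S', T', ⟨hS', S, hSp, hS'S, hSS'⟩, ⟨hT', T, hTp, hT'T, hTT'⟩, ?_⟩
  simp only [Matrix.mul_assoc, hTT', Matrix.mul_one, ← Matrix.mul_assoc S', hS'S, Matrix.one_mul]

lemma submatrix {A B : Matrix ι ι (RatFunc K)} (h : BiproperEquivalent A B) (e f : κ ≃ ι) :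
    BiproperEquivalent (A.submatrix e f) (B.submatrix e f) := by
  obtain ⟨S, T, hS, hT, rfl⟩ := h
  exact ⟨S.submatrix e e, T.submatrix f f, hS.submatrix e e, hT.submatrix f f, by simp⟩

lemma fromBlocks_zero {A B : Matrix ι ι (RatFunc K)} (h : BiproperEquivalent A B)
    (D : Matrix κ κ (RatFunc K)) :
    BiproperEquivalent (fromBlocks A 0 0 D) (fromBlocks B 0 0 D) := by
  obtain ⟨S, T, hS, hT, rfl⟩ := h
  exact ⟨fromBlocks S 0 0 1, fromBlocks T 0 0 1, hS.fromBlocks_zero isBiproper_one,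
    hT.fromBlocks_zero isBiproper_one, by simp [fromBlocks_multiply]⟩

lemma det_ne_zero {A B : Matrix ι ι (RatFunc K)} (h : BiproperEquivalent A B) (hA : A.det ≠ 0) :
    B.det ≠ 0 := by
  obtain ⟨S, T, hS, hT, rfl⟩ := h
  simp [hS.det_ne_zero, hT.det_ne_zero, hA]

end BiproperEquivalent

lemma biproperEquivalent_submatrix (A : Matrix ι ι (RatFunc K)) (σ τ : Equiv.Perm ι) :
    BiproperEquivalent A (A.submatrix σ τ) :=
  ⟨(1 : Matrix ι ι (RatFunc K)).submatrix σ (Equiv.refl ι),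
    (1 : Matrix ι ι (RatFunc K)).submatrix (Equiv.refl ι) τ,
    isBiproper_one.submatrix _ _, isBiproper_one.submatrix _ _,
    by rw [one_submatrix_mul, mul_submatrix_one, submatrix_submatrix]; rfl⟩

end BiproperEquivalent

section Diagonalization

open Pivot Sum

lemma biproperEquivalent_listTransvecCol_mul_mul_listTransvecRow {r : ℕ}
    (M : Matrix (Fin r ⊕ Unit) (Fin r ⊕ Unit) (RatFunc K)) (hM : M (inr ()) (inr ()) ≠ 0)
    (hmax : ∀ i j, degBot (M i j) ≤ degBot (M (inr ()) (inr ()))) :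
    BiproperEquivalent M ((listTransvecCol M).prod * M * (listTransvecRow M).prod) := by
  have hcoeff (i j) : -M i j / M (inr ()) (inr ()) ∈ properSubring K :=
    div_mem_properSubring hM (by simpa using hmax i j)
  refine ⟨_, _, isBiproper_list_prod ?_, isBiproper_list_prod ?_, rfl⟩ <;>
    simp only [listTransvecCol, listTransvecRow, List.mem_ofFn] <;>
    rintro _ ⟨i, rfl⟩ <;>
    exact isBiproper_transvection (by simp) (hcoeff _ _)

lemma exists_biproperEquivalent_diagonal_sum_unit {r : ℕ}
    (ih : ∀ A : Matrix (Fin r) (Fin r) (RatFunc K), ∃ d, BiproperEquivalent A (diagonal d))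
    (M : Matrix (Fin r ⊕ Unit) (Fin r ⊕ Unit) (RatFunc K)) :
    ∃ d, BiproperEquivalent M (diagonal d) := by
  obtain ⟨⟨i₀, j₀⟩, hmax⟩ := Finite.exists_max fun p : _ × _ => degBot (M p.1 p.2)
  rcases eq_or_ne (M i₀ j₀) 0 with h0 | h0
  · have hM : M = diagonal 0 := by
      ext i j
      simpa [h0] using hmax (i, j)
    exact ⟨0, hM ▸ .refl _⟩
  set M' := M.submatrix (Equiv.swap (inr ()) i₀) (Equiv.swap (inr ()) j₀)
  set N := (listTransvecCol M').prod * M' * (listTransvecRow M').prod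
  have hM'N : BiproperEquivalent M' N :=
    biproperEquivalent_listTransvecCol_mul_mul_listTransvecRow M' (by simpa [M'] using h0)
      fun i j => by simpa [M'] using hmax (_, _)
  have hN : N = fromBlocks N.toBlocks₁₁ 0 0 (diagonal fun _ => N (inr ()) (inr ())) := by
    obtain ⟨h₁₂, h₂₁⟩ := isTwoBlockDiagonal_listTransvecCol_mul_mul_listTransvecRow M'
      (by simpa [M'] using h0)
    rw [← fromBlocks_toBlocks N, h₁₂, h₂₁]
    rfl
  obtain ⟨d, hd⟩ := ih N.toBlocks₁₁
  refine ⟨Sum.elim d fun _ => N (inr ()) (inr ()), ?_⟩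
  rw [← fromBlocks_diagonal]
  refine ((biproperEquivalent_submatrix M _ _).trans hM'N).trans ?_
  rw [hN]
  exact hd.fromBlocks_zero _

lemma exists_biproperEquivalent_diagonal_of_equiv [Fintype ι] [DecidableEq ι] [Fintype κ]
    [DecidableEq κ] (e : ι ≃ κ)
    (h : ∀ B : Matrix κ κ (RatFunc K), ∃ d, BiproperEquivalent B (diagonal d))
    (A : Matrix ι ι (RatFunc K)) : ∃ d, BiproperEquivalent A (diagonal d) := by
  obtain ⟨d, hd⟩ := h (A.submatrix e.symm e.symm)
  exact ⟨d ∘ e, by simpa using hd.submatrix e e⟩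

lemma exists_biproperEquivalent_diagonal_fin :
    ∀ (r : ℕ) (A : Matrix (Fin r) (Fin r) (RatFunc K)), ∃ d, BiproperEquivalent A (diagonal d)
  | 0, A => ⟨0, Subsingleton.elim A (diagonal 0) ▸ .refl _⟩
  | r + 1, A => exists_biproperEquivalent_diagonal_of_equiv
      (Fintype.equivOfCardEq (by simp) : Fin (r + 1) ≃ Fin r ⊕ Unit)
      (exists_biproperEquivalent_diagonal_sum_unit (exists_biproperEquivalent_diagonal_fin r)) A

theorem exists_biproperEquivalent_diagonal [Fintype ι] [DecidableEq ι]
    (A : Matrix ι ι (RatFunc K)) : ∃ d, BiproperEquivalent A (diagonal d) :=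
  exists_biproperEquivalent_diagonal_of_equiv (Fintype.equivFin ι)
    (exists_biproperEquivalent_diagonal_fin _) A

end Diagonalization

lemma biproperEquivalent_diagonal_X_zpow_intDegree [Fintype ι] [DecidableEq ι]
    {d : ι → RatFunc K} (hd : ∀ i, d i ≠ 0) :
    BiproperEquivalent (diagonal d) (diagonal fun i => RatFunc.X ^ (d i).intDegree) := by
  have hX (i : ι) : (RatFunc.X : RatFunc K) ^ (d i).intDegree ≠ 0 :=
    zpow_ne_zero _ RatFunc.X_ne_zero
  have hdeg (i : ι) : degBot ((RatFunc.X : RatFunc K) ^ (d i).intDegree) = degBot (d i) := by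
    rw [degBot_X_zpow, degBot_of_ne_zero (hd i)]
  refine ⟨diagonal fun i => RatFunc.X ^ (d i).intDegree / d i, 1,
    isBiproper_diagonal (fun i => div_ne_zero (hX i) (hd i))
      (fun i => div_mem_properSubring (hd i) (hdeg i).le)
      (fun i => by simpa using div_mem_properSubring (hX i) (hdeg i).ge),
    isBiproper_one, ?_⟩
  simp [hd]

theorem exists_antitone_biproperEquivalent_diagonal_X_zpow {n : ℕ}
    (A : Matrix (Fin n) (Fin n) (RatFunc K)) (hA : A.det ≠ 0) :
    ∃ α : Fin n → ℤ, Antitone α ∧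
      BiproperEquivalent A (diagonal fun i => RatFunc.X ^ α i) := by
  obtain ⟨d, hAd⟩ := exists_biproperEquivalent_diagonal A
  have hd (i : Fin n) : d i ≠ 0 := by
    have := hAd.det_ne_zero hA
    rw [det_diagonal] at this
    exact Finset.prod_ne_zero_iff.mp this i (Finset.mem_univ i)
  set β : Fin n → ℤ := fun i => (d i).intDegree
  set σ := Tuple.sort (OrderDual.toDual ∘ β)
  have hσ : Monotone (OrderDual.toDual ∘ β ∘ σ) :=
    Tuple.monotone_sort (OrderDual.toDual ∘ β)
  refine ⟨β ∘ σ, monotone_toDual_comp_iff.mp hσ, ?_⟩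
  simpa [Function.comp_def, β] using
    ((hAd.trans (biproperEquivalent_diagonal_X_zpow_intDegree hd)).trans
      (biproperEquivalent_submatrix _ σ σ))

end Matrix

theorem Matrix.det_mul_eq_sum_prod_mul_det_submatrix {R ι κ : Type*} [CommRing R] [Fintype ι]
    [Fintype κ] [DecidableEq κ] (S : Matrix κ ι R) (M : Matrix ι κ R) :
    (S * M).det = ∑ f : κ → ι, (∏ i, S i (f i)) * (M.submatrix f id).det := by
  have hrows : S * M = fun i => ∑ l, S i l • M l := by
    ext i j
    simp [Matrix.mul_apply, Finset.sum_apply]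
  have := (Matrix.detRowAlternating : (κ → R) [⋀^κ]→ₗ[R] R).toMultilinearMap.map_sum
    fun i l => S i l • M l
  simp only [MultilinearMap.map_smul_univ, smul_eq_mul] at this
  rw [Matrix.det, hrows]
  exact this

lemma Fin.val_le_val_of_strictMono {k n : ℕ} {q : Fin k → Fin n} (hq : StrictMono q)
    (i : Fin k) : (i : ℕ) ≤ q i := by
  simpa using Finset.card_le_card_of_injOn q (s := Finset.Iio i) (t := Finset.Iio (q i))
    (fun j hj => by simpa using hq (by simpa using hj)) hq.injective.injOn

lemma Antitone.sum_comp_le_sum_castLE {k n : ℕ} {α : Fin n → ℤ} (hα : Antitone α)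
    (p : Fin k ↪ Fin n) (hk : k ≤ n) : ∑ i, α (p i) ≤ ∑ i, α (Fin.castLE hk i) := by
  set σ := Tuple.sort p
  have hq : StrictMono (p ∘ σ) :=
    (Tuple.monotone_sort p).strictMono_of_injective (p.injective.comp σ.injective)
  rw [← Equiv.sum_comp σ]
  exact Finset.sum_le_sum fun i _ => hα (Fin.le_def.mpr (Fin.val_le_val_of_strictMono hq i))

section DeltaMinor

variable {K : Type*} [Field K] {n : ℕ}

open Matrix

lemma degBot_det_le_sum {ι : Type*} [Fintype ι] [DecidableEq ι] (N : Matrix ι ι (RatFunc K))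
    (β : ι → WithBot ℤ) (h : ∀ i j, degBot (N i j) ≤ β i) :
    degBot N.det ≤ ∑ i, β i := by
  rw [det_apply]
  refine degBot_sum_le _ _ fun σ _ => ?_
  have hsign : degBot (Equiv.Perm.sign σ • ∏ i, N (σ i) i) = degBot (∏ i, N (σ i) i) := by
    rcases Int.units_eq_one_or (Equiv.Perm.sign σ) with hs | hs <;> simp [hs]
  rw [hsign, degBot_prod, ← Equiv.sum_comp σ β]
  exact Finset.sum_le_sum fun i _ => h (σ i) i

lemma degBot_det_submatrix_le_deltaMinor {k : ℕ} (A : Matrix (Fin n) (Fin n) (RatFunc K))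
    (f g : Fin k → Fin n) : degBot (A.submatrix f g).det ≤ deltaMinor A k := by
  by_cases hf : f.Injective
  · by_cases hg : g.Injective
    · exact Finset.le_sup (f := fun p : (Fin k ↪ Fin n) × (Fin k ↪ Fin n) =>
        degBot (A.submatrix p.1 p.2).det) (Finset.mem_univ (⟨f, hf⟩, ⟨g, hg⟩))
    obtain ⟨i, j, hgij, hij⟩ := Function.not_injective_iff.mp hg
    rw [det_zero_of_column_eq (M := A.submatrix f g) hij fun l => by simp [hgij], degBot_zero]
    exact bot_le
  obtain ⟨i, j, hfij, hij⟩ := Function.not_injective_iff.mp hf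
  rw [det_zero_of_row_eq (M := A.submatrix f g) hij (by ext; simp [hfij]), degBot_zero]
  exact bot_le

lemma deltaMinor_isProper_mul_le {S : Matrix (Fin n) (Fin n) (RatFunc K)} (hS : S.IsProper)
    (A : Matrix (Fin n) (Fin n) (RatFunc K)) (k : ℕ) :
    deltaMinor (S * A) k ≤ deltaMinor A k := by
  refine Finset.sup_le fun ⟨p, q⟩ _ => ?_
  rw [submatrix_mul _ _ _ id _ Function.bijective_id, det_mul_eq_sum_prod_mul_det_submatrix]
  refine degBot_sum_le _ _ fun f _ => ?_
  rw [degBot_mul, ← zero_add (deltaMinor A k)]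
  exact add_le_add (Subring.prod_mem _ fun i _ => hS _ _)
    (degBot_det_submatrix_le_deltaMinor A f q)

lemma deltaMinor_transpose (A : Matrix (Fin n) (Fin n) (RatFunc K)) (k : ℕ) :
    deltaMinor Aᵀ k = deltaMinor A k := by
  have key (B : Matrix (Fin n) (Fin n) (RatFunc K)) : deltaMinor Bᵀ k ≤ deltaMinor B k :=
    Finset.sup_le fun ⟨p, q⟩ _ => by
      simpa [← transpose_submatrix, det_transpose] using degBot_det_submatrix_le_deltaMinor B q p
  exact (key A).antisymm (by simpa using key Aᵀ)

lemma deltaMinor_mul_isProper_le {T : Matrix (Fin n) (Fin n) (RatFunc K)} (hT : T.IsProper)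
    (A : Matrix (Fin n) (Fin n) (RatFunc K)) (k : ℕ) :
    deltaMinor (A * T) k ≤ deltaMinor A k := by
  rw [← deltaMinor_transpose, transpose_mul, ← deltaMinor_transpose A]
  exact deltaMinor_isProper_mul_le hT.transpose Aᵀ k

lemma Matrix.BiproperEquivalent.deltaMinor_le {A B : Matrix (Fin n) (Fin n) (RatFunc K)}
    (h : BiproperEquivalent A B) (k : ℕ) : deltaMinor B k ≤ deltaMinor A k := by
  obtain ⟨S, T, hS, hT, rfl⟩ := h
  exact (deltaMinor_mul_isProper_le hT.1 _ k).trans (deltaMinor_isProper_mul_le hS.1 A k)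

lemma Matrix.BiproperEquivalent.deltaMinor_eq {A B : Matrix (Fin n) (Fin n) (RatFunc K)}
    (h : BiproperEquivalent A B) (k : ℕ) : deltaMinor A k = deltaMinor B k :=
  (h.symm.deltaMinor_le k).antisymm (h.deltaMinor_le k)

lemma deltaMinor_diagonal_X_zpow {α : Fin n → ℤ} (hα : Antitone α) {k : ℕ} (hk : k ≤ n) :
    deltaMinor (diagonal fun i => (RatFunc.X : RatFunc K) ^ α i) k =
      ((∑ i : Fin k, α (Fin.castLE hk i) : ℤ) : WithBot ℤ) := by
  refine le_antisymm (Finset.sup_le fun ⟨p, q⟩ _ => ?_) ?_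
  · refine (degBot_det_le_sum _ (fun i => (α (p i) : WithBot ℤ)) fun i j => ?_).trans ?_
    · simp only [submatrix_apply, diagonal_apply]
      split_ifs
      · rw [degBot_X_zpow]
      · simp
    · exact_mod_cast hα.sum_comp_le_sum_castLE p hk
  · have := degBot_det_submatrix_le_deltaMinor
      (diagonal fun i => (RatFunc.X : RatFunc K) ^ α i) (Fin.castLE hk) (Fin.castLE hk)
    rw [submatrix_diagonal _ _ (Fin.castLE_injective hk), det_diagonal, degBot_prod] at this
    simpa [degBot_X_zpow] using this

end DeltaMinor

/-- Smith–McMillan form at infinity: for a nonsingular `A ∈ K(t)^{n×n}` there are biproper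
matrices `S, T` and a nonincreasing integer vector `α` with `S A T = diag(t^{α_1},…,t^{α_n})`;
moreover `α_k = δ_k − δ_{k−1}` where `δ_k` is the maximum degree of a `k × k` minor of `A`. -/
theorem smith_mcmillan_form {K : Type*} [Field K] {n : ℕ}
    (A : Matrix (Fin n) (Fin n) (RatFunc K)) (hA : A.det ≠ 0) :
    ∃ (S T : Matrix (Fin n) (Fin n) (RatFunc K)) (α : Fin n → ℤ),
      Antitone α ∧
      (∀ i j, degBot (S i j) ≤ 0) ∧ (∀ i j, degBot (T i j) ≤ 0) ∧
      (∃ S', (∀ i j, degBot (S' i j) ≤ 0) ∧ S * S' = 1 ∧ S' * S = 1) ∧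
      (∃ T', (∀ i j, degBot (T' i j) ≤ 0) ∧ T * T' = 1 ∧ T' * T = 1) ∧
      S * A * T = Matrix.diagonal (fun i => (RatFunc.X : RatFunc K) ^ (α i)) ∧
      ∀ k : Fin n, deltaMinor A (k + 1) = deltaMinor A k + (α k : WithBot ℤ) := by
  obtain ⟨α, hα, hAD⟩ := Matrix.exists_antitone_biproperEquivalent_diagonal_X_zpow A hA
  obtain ⟨S, T, hS, hT, hSAT⟩ := id hAD
  refine ⟨S, T, α, hα, hS.1, hT.1, hS.2, hT.2, hSAT, fun k => ?_⟩
  rw [hAD.deltaMinor_eq, hAD.deltaMinor_eq, deltaMinor_diagonal_X_zpow hα k.2,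
    deltaMinor_diagonal_X_zpow hα k.2.le, Fin.sum_univ_castSucc]
  simp [show Fin.castLE k.2 (Fin.last k) = k from rfl]
end

section
/- Let g : ℤⁿ → ℝ ∪ {∞} be an L-convex function (with g(x+𝟏) = g(x)) attaining its minimum. Suppose the steepest descent algorithm starts at x⁰ with g(x⁰) < ∞ and at each step replaces the current point x by a minimizer of g over x + {0,1}ⁿ. Let k = min{‖x⁰ − y*‖_∞ : y* is a minimizer of g with y* ≥ x⁰}. Then the point obtained after k iterations is a global minimizer of g. -/
/-!
Let `x'` minimize `g` on the box `x + {0,1}ⁿ = [x, x + 1]` and let `y` be a global minimizer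
with `x ≤ y ≤ x + (d + 1)`. Submodularity, compared each time against the box minimality of `x'`,
shows that `y₁ = (x' + d) ⊓ y` is a global minimizer (the box point is `(x' + d) ⊔ y` shifted back
by `d`, which `g (z + 1) = g z` allows) and then that so is `y' = x' ⊔ y₁` (the box point is
`x' ⊓ y₁`). Since `x' ≤ y' ≤ x' + d`, the distance to a minimizer above the current point drops by
one per iteration.
-/

/-- The ℓ∞-distance between two points of `ℤⁿ`. -/
def distInf {n : ℕ} (x y : Fin n → ℤ) : ℕ :=
  Finset.univ.sup fun i => (x i - y i).natAbs

open Set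

lemma le_add_distInf {n : ℕ} (x y : Fin n → ℤ) : y ≤ x + (distInf x y : Fin n → ℤ) := by
  intro i
  have : (x i - y i).natAbs ≤ distInf x y :=
    Finset.le_sup (f := fun i => (x i - y i).natAbs) (Finset.mem_univ i)
  simp only [Pi.add_apply, Pi.natCast_apply]
  omega

lemma mem_Icc_self_add_one_iff {ι : Type*} {x v : ι → ℤ} :
    v ∈ Icc x (x + 1) ↔ ∃ u : ι → ℤ, (∀ j, u j = 0 ∨ u j = 1) ∧ v = x + u := by
  constructor
  · rintro ⟨hxv, hvx⟩
    refine ⟨v - x, fun j => ?_, by abel⟩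
    have h₁ := hxv j
    have h₂ := hvx j
    simp only [Pi.sub_apply, Pi.add_apply, Pi.one_apply] at h₁ h₂ ⊢
    omega
  · rintro ⟨u, hu, rfl⟩
    constructor <;> intro j <;> rcases hu j with h | h <;> simp [h]

lemma le_of_add_le_add_of_le {β : Type*} [AddCommMonoid β] [PartialOrder β]
    [IsOrderedAddMonoid β] {a b c e : β} (ha : AddLECancellable a) (hab : a ≤ b)
    (h : c + b ≤ a + e) : c ≤ e :=
  ha <| calc a + c = c + a := add_comm a c
    _ ≤ c + b := by gcongr
    _ ≤ a + e := h

section LConvex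

variable {ι β : Type*} {g : (ι → ℤ) → β}

lemma apply_add_natCast (hlin : ∀ x, g (x + 1) = g x) (x : ι → ℤ) (c : ℕ) :
    g (x + c) = g x := by
  induction c with
  | zero => simp
  | succ c ih => rw [Nat.cast_succ, ← add_assoc, hlin, ih]

variable [AddCommMonoid β] [PartialOrder β] [IsOrderedAddMonoid β]
  (hsub : ∀ x y, g (x ⊓ y) + g (x ⊔ y) ≤ g x + g y)
  {x x' : ι → ℤ} (hx' : x' ∈ Icc x (x + 1)) (hmin : IsMinOn g (Icc x (x + 1)) x')
  (hcancel : AddLECancellable (g x'))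
include hsub hx' hmin hcancel

lemma isMin_sup_of_isMinOn_Icc {y : ι → ℤ} (hy : ∀ z, g y ≤ g z) (hxy : x ≤ y) :
    ∀ z, g (x' ⊔ y) ≤ g z := by
  have hinf : x' ⊓ y ∈ Icc x (x + 1) := ⟨le_inf hx'.1 hxy, inf_le_left.trans hx'.2⟩
  have hle := le_of_add_le_add_of_le hcancel (hmin hinf) ((add_comm _ _).le.trans (hsub x' y))
  exact fun z => hle.trans (hy z)

lemma isMin_inf_of_isMinOn_Icc (hlin : ∀ x, g (x + 1) = g x) {y : ι → ℤ} {d : ℕ}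
    (hy : ∀ z, g y ≤ g z) (hyx : y ≤ x + (d + 1 : ℕ)) :
    ∀ z, g ((x' + d) ⊓ y) ≤ g z := by
  have hsup : x' ⊔ (y - d) ∈ Icc x (x + 1) := by
    refine ⟨hx'.1.trans le_sup_left, sup_le hx'.2 ?_⟩
    rw [Nat.cast_succ, ← add_assoc] at hyx
    rwa [sub_le_iff_le_add, add_right_comm]
  have hexch := hsub (x' + d) y
  rw [apply_add_natCast hlin, ← sub_add_cancel y (d : ι → ℤ), ← sup_add,
    apply_add_natCast hlin, sub_add_cancel] at hexch
  have hle := le_of_add_le_add_of_le hcancel (hmin hsup) hexch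
  exact fun z => hle.trans (hy z)

lemma exists_isMin_mem_Icc_of_isMinOn_Icc (hlin : ∀ x, g (x + 1) = g x) {y : ι → ℤ} {d : ℕ}
    (hy : ∀ z, g y ≤ g z) (hyx : y ∈ Icc x (x + (d + 1 : ℕ))) :
    ∃ y', (∀ z, g y' ≤ g z) ∧ y' ∈ Icc x' (x' + d) := by
  have hdx : x' ≤ x' + d := le_add_of_nonneg_right (Nat.cast_nonneg d)
  refine ⟨x' ⊔ ((x' + d) ⊓ y), ?_, le_sup_left, sup_le hdx inf_le_left⟩
  exact isMin_sup_of_isMinOn_Icc hsub hx' hmin hcancel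
    (isMin_inf_of_isMinOn_Icc hsub hx' hmin hcancel hlin hy hyx.2) (le_inf (hx'.1.trans hdx) hyx.1)

end LConvex

theorem isMin_of_steepest_descent {ι β : Type*} [AddCommMonoid β] [PartialOrder β]
    [IsOrderedAddMonoid β] {g : (ι → ℤ) → β}
    (hsub : ∀ x y, g (x ⊓ y) + g (x ⊔ y) ≤ g x + g y) (hlin : ∀ x, g (x + 1) = g x)
    {x : ℕ → ι → ℤ} (hbox : ∀ i, x (i + 1) ∈ Icc (x i) (x i + 1))
    (hmin : ∀ i, IsMinOn g (Icc (x i) (x i + 1)) (x (i + 1)))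
    (hcancel : ∀ i, AddLECancellable (g (x i))) {k : ℕ} {y : ι → ℤ}
    (hy : ∀ z, g y ≤ g z) (hyk : y ∈ Icc (x 0) (x 0 + k)) :
    ∀ z, g (x k) ≤ g z := by
  have key : ∀ i ≤ k, ∃ y', (∀ z, g y' ≤ g z) ∧ y' ∈ Icc (x i) (x i + (k - i : ℕ)) := by
    intro i hi
    induction i with
    | zero => exact ⟨y, hy, hyk⟩
    | succ i ih =>
      obtain ⟨y', hy', hy'mem⟩ := ih (by omega)
      rw [show k - i = k - (i + 1) + 1 by omega] at hy'mem
      exact exists_isMin_mem_Icc_of_isMinOn_Icc hsub (hbox i) (hmin i) (hcancel (i + 1)) hlin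
        hy' hy'mem
  obtain ⟨y', hy', hle, hge⟩ := key k le_rfl
  rw [Nat.sub_self, Nat.cast_zero, add_zero] at hge
  rwa [le_antisymm hge hle] at hy'

theorem steepest_descent_bound_general {n : ℕ} (g : (Fin n → ℤ) → WithTop ℝ)
    (hsub : ∀ x y : Fin n → ℤ, g (x ⊓ y) + g (x ⊔ y) ≤ g x + g y)
    (hlin : ∀ x : Fin n → ℤ, g (x + 1) = g x)
    (x : ℕ → Fin n → ℤ) (hx0 : g (x 0) ≠ ⊤)
    (hstep : ∀ i : ℕ,
      (∃ u : Fin n → ℤ, (∀ j, u j = 0 ∨ u j = 1) ∧ x (i + 1) = x i + u) ∧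
      (∀ u : Fin n → ℤ, (∀ j, u j = 0 ∨ u j = 1) → g (x (i + 1)) ≤ g (x i + u)))
    (k : ℕ) (y : Fin n → ℤ)
    (hy : ∀ z, g y ≤ g z) (hyge : x 0 ≤ y) (hyk : distInf (x 0) y = k) :
    ∀ z, g (x k) ≤ g z := by
  have hbox i : x (i + 1) ∈ Icc (x i) (x i + 1) := mem_Icc_self_add_one_iff.2 (hstep i).1
  have hmin i : IsMinOn g (Icc (x i) (x i + 1)) (x (i + 1)) := fun v hv => by
    obtain ⟨u, hu, rfl⟩ := mem_Icc_self_add_one_iff.1 hv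
    exact (hstep i).2 u hu
  have hdesc : Antitone (g ∘ x) := antitone_nat_of_succ_le fun i =>
    hmin i (left_mem_Icc.2 (le_add_of_nonneg_right zero_le_one))
  have hfin i : g (x i) ≠ ⊤ := ne_top_of_le_ne_top hx0 (hdesc i.zero_le)
  exact isMin_of_steepest_descent hsub hlin hbox hmin
    (fun i => WithTop.addLECancellable_of_ne_top (hfin i)) hy ⟨hyge, hyk ▸ le_add_distInf _ _⟩

/-- Iteration bound for the steepest descent algorithm for an L-convex function `g` on `ℤⁿ`:
if the sequence `x` starts at a point of finite value and at each step moves to a minimizer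
of `g` over `xⁱ + {0,1}ⁿ`, and `k` is the minimum ℓ∞-distance from `x 0` to a minimizer
`y* ≥ x 0`, then `x k` is a global minimizer of `g`. -/
theorem steepest_descent_bound {n : ℕ} (g : (Fin n → ℤ) → WithTop ℝ)
    (hsub : ∀ x y : Fin n → ℤ, g (x ⊓ y) + g (x ⊔ y) ≤ g x + g y)
    (hlin : ∀ x : Fin n → ℤ, g (x + 1) = g x)
    (x : ℕ → Fin n → ℤ) (hx0 : g (x 0) ≠ ⊤)
    (hstep : ∀ i : ℕ,
      (∃ u : Fin n → ℤ, (∀ j, u j = 0 ∨ u j = 1) ∧ x (i + 1) = x i + u) ∧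
      (∀ u : Fin n → ℤ, (∀ j, u j = 0 ∨ u j = 1) → g (x (i + 1)) ≤ g (x i + u)))
    (k : ℕ) (y : Fin n → ℤ)
    (hy : ∀ z, g y ≤ g z) (hyge : x 0 ≤ y) (hyk : distInf (x 0) y = k)
    (hkmin : ∀ z : Fin n → ℤ, (∀ w, g z ≤ g w) → x 0 ≤ z → k ≤ distInf (x 0) z) :
    ∀ z, g (x k) ≤ g z :=
  steepest_descent_bound_general g hsub hlin x hx0 hstep k y hy hyge hyk
end

section
/- Bipartite matching as matrix rank: for a bipartite graph G = (U, V; E) with |U| = n, |V| = m, consider the n×m matrix A over K(x_e : e ∈ E) whose (i,j) entry is x_{ij} if ij ∈ E and 0 otherwise, with algebraically independent indeterminates x_e. Then rank A equals the maximum size of a matching of G. -/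
/-!
The rank of a matrix over a field is the largest size of a nonsingular square submatrix.
A nonzero `k × k` minor of the generic matrix has a nonzero term in its Leibniz expansion,
and the entries of that term are `k` pairwise disjoint edges. Conversely, the minor on the
rows and columns of a matching specializes to the identity matrix when `x_e` is set to `1`
on the matching and to `0` elsewhere, so it is nonzero.
-/

/-- The generic bipartite-graph matrix of a bipartite graph with color classes `Fin n`,
`Fin m` and edge set `E`: the `(i,j)` entry is the indeterminate `x_{(i,j)}` if
`(i,j) ∈ E`, and `0` otherwise, over the rational function field `K(x_e : e ∈ E)`. -/
noncomputable def bipartiteMatrix {K : Type*} [Field K] {n m : ℕ}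
    (E : Finset (Fin n × Fin m)) :
    Matrix (Fin n) (Fin m) (FractionRing (MvPolynomial (Fin n × Fin m) K)) :=
  Matrix.of fun i j =>
    if (i, j) ∈ E then
      algebraMap (MvPolynomial (Fin n × Fin m) K) _ (MvPolynomial.X (i, j))
    else 0

open Matrix MvPolynomial Module Function

theorem exists_linearIndependent_comp_fin {K V ι : Type*} [Field K] [AddCommGroup V]
    [Module K V] [Finite ι] (v : ι → V) {r : ℕ}
    (hr : finrank K (Submodule.span K (Set.range v)) = r) :
    ∃ g : Fin r → ι, LinearIndependent K (v ∘ g) := by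
  obtain ⟨κ, a, ha, hspan, hli⟩ := exists_linearIndependent' K v
  have : Finite κ := Finite.of_injective a ha
  have : Fintype κ := Fintype.ofFinite κ
  have hcard : Fintype.card κ = r := by rw [← hr, ← hspan, finrank_span_eq_card hli]
  let e : Fin r ≃ κ := (Fintype.equivFinOfCardEq hcard).symm
  exact ⟨a ∘ e, hli.comp e e.injective⟩

namespace Matrix

theorem exists_submatrix_det_ne_zero {K m n : Type*} [Field K] [Fintype m] [Fintype n]
    (A : Matrix m n K) :
    ∃ (f : Fin A.rank → m) (g : Fin A.rank → n), (A.submatrix f g).det ≠ 0 := by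
  obtain ⟨g, hg⟩ := exists_linearIndependent_comp_fin A.col (A.rank_eq_finrank_span_cols).symm
  let B := A.submatrix id g
  have hB : B.rank = A.rank := by
    rw [← rank_transpose, LinearIndependent.rank_matrix (M := Bᵀ) hg, Fintype.card_fin]
  obtain ⟨f, hf⟩ :=
    exists_linearIndependent_comp_fin B.row (hB ▸ B.rank_eq_finrank_span_row).symm
  exact ⟨f, g, nonsingular_iff_det_ne_zero.mp (Nonsingular.of_linearIndependent_row hf)⟩

variable {R ι m n : Type*} [CommRing R] [Fintype ι] [DecidableEq ι]

theorem exists_perm_forall_ne_zero_of_det_ne_zero {A : Matrix ι ι R} (h : A.det ≠ 0) :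
    ∃ σ : Equiv.Perm ι, ∀ i, A (σ i) i ≠ 0 := by
  by_contra! hσ
  refine h (det_apply A ▸ Finset.sum_eq_zero fun σ _ => ?_)
  obtain ⟨i, hi⟩ := hσ σ
  rw [Finset.prod_eq_zero (f := fun j => A (σ j) j) (Finset.mem_univ i) hi, smul_zero]

variable {A : Matrix m n R} {f : ι → m} {g : ι → n}

theorem injective_of_det_submatrix_ne_zero_left (h : (A.submatrix f g).det ≠ 0) :
    Injective f := by
  intro i j hij
  by_contra hne
  exact h (det_zero_of_row_eq hne (by ext; simp [hij]))

theorem injective_of_det_submatrix_ne_zero_right (h : (A.submatrix f g).det ≠ 0) :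
    Injective g := by
  intro i j hij
  by_contra hne
  exact h (det_zero_of_column_eq hne (by simp [hij]))

end Matrix

theorem exists_matching_card_eq_iff {α β : Type*} [DecidableEq α] [DecidableEq β]
    (E : Finset (α × β)) (k : ℕ) :
    (∃ M : Finset (α × β), M ⊆ E ∧
        (∀ e ∈ M, ∀ f ∈ M, e ≠ f → e.1 ≠ f.1 ∧ e.2 ≠ f.2) ∧ M.card = k) ↔
      ∃ (f : Fin k → α) (g : Fin k → β),
        Injective f ∧ Injective g ∧ ∀ i, (f i, g i) ∈ E := by
  constructor
  · rintro ⟨M, hME, hM, rfl⟩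
    let p : Fin M.card → α × β := fun i => M.equivFin.symm i
    have hp : Injective p := Subtype.val_injective.comp M.equivFin.symm.injective
    refine ⟨Prod.fst ∘ p, Prod.snd ∘ p, fun i j hij => ?_, fun i j hij => ?_,
      fun i => hME (M.equivFin.symm i).2⟩
    · by_contra hne
      exact (hM _ (M.equivFin.symm i).2 _ (M.equivFin.symm j).2 (hp.ne hne)).1 hij
    · by_contra hne
      exact (hM _ (M.equivFin.symm i).2 _ (M.equivFin.symm j).2 (hp.ne hne)).2 hij
  · rintro ⟨f, g, hf, hg, hE⟩
    refine ⟨Finset.univ.image fun i => (f i, g i), ?_, ?_, ?_⟩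
    · simpa [Finset.image_subset_iff] using hE
    · simp only [Finset.mem_image, Finset.mem_univ, true_and]
      rintro _ ⟨i, rfl⟩ _ ⟨j, rfl⟩ hne
      have hij : i ≠ j := by rintro rfl; exact hne rfl
      exact ⟨hf.ne hij, hg.ne hij⟩
    · rw [Finset.card_image_of_injective _ fun i j hij => hf (congrArg Prod.fst hij),
        Finset.card_univ, Fintype.card_fin]

section Generic

variable {α β : Type*} [DecidableEq α] [DecidableEq β]

noncomputable def genericMatrix (R : Type*) [CommSemiring R] (E : Finset (α × β)) :
    Matrix α β (MvPolynomial (α × β) R) :=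
  Matrix.of fun i j => if (i, j) ∈ E then X (i, j) else 0

theorem det_genericMatrix_submatrix_ne_zero {R ι : Type*} [CommRing R] [Nontrivial R] [Fintype ι]
    [DecidableEq ι] {E : Finset (α × β)} {f : ι → α} {g : ι → β} (hf : Injective f)
    (hg : Injective g) (hE : ∀ i, (f i, g i) ∈ E) :
    ((genericMatrix R E).submatrix f g).det ≠ 0 := by
  classical
  let v : α × β → R := fun e => if ∃ l, (f l, g l) = e then 1 else 0
  have hv : ∀ i j, v (f i, g j) = if i = j then 1 else 0 := fun i j => by
    have : (∃ l, (f l, g l) = (f i, g j)) ↔ i = j :=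
      ⟨fun ⟨l, hl⟩ => (hf (Prod.ext_iff.1 hl).1).symm.trans (hg (Prod.ext_iff.1 hl).2),
        fun h => ⟨i, h ▸ rfl⟩⟩
    simp only [v, this]
  have hspec : ((genericMatrix R E).submatrix f g).map (eval v) = 1 := by
    ext i j
    by_cases hij : i = j
    · subst hij
      simp [genericMatrix, hE i, hv]
    · by_cases hmem : (f i, g j) ∈ E <;> simp [genericMatrix, hmem, hv, hij]
  intro h
  simpa [← RingHom.mapMatrix_apply, ← RingHom.map_det, h] using congrArg det hspec

end Generic

section Bipartite

variable {K : Type*} [Field K] {n m : ℕ} {E : Finset (Fin n × Fin m)}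

theorem bipartiteMatrix_eq_map :
    bipartiteMatrix (K := K) E = (genericMatrix K E).map (algebraMap _ _) := by
  ext i j
  by_cases h : (i, j) ∈ E <;> simp [bipartiteMatrix, genericMatrix, h]

theorem mem_of_bipartiteMatrix_ne_zero {i : Fin n} {j : Fin m}
    (h : bipartiteMatrix (K := K) E i j ≠ 0) : (i, j) ∈ E := by
  by_contra hE
  simp [bipartiteMatrix, hE] at h

theorem det_bipartiteMatrix_submatrix_ne_zero {k : ℕ} {f : Fin k → Fin n} {g : Fin k → Fin m}
    (hf : Injective f) (hg : Injective g) (hE : ∀ i, (f i, g i) ∈ E) :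
    ((bipartiteMatrix (K := K) E).submatrix f g).det ≠ 0 := by
  rw [bipartiteMatrix_eq_map, submatrix_map, ← RingHom.mapMatrix_apply, ← RingHom.map_det]
  exact (map_ne_zero_iff _ (IsFractionRing.injective _ _)).mpr
    (det_genericMatrix_submatrix_ne_zero hf hg hE)

end Bipartite

/-- Bipartite matching as matrix rank: the rank of the generic bipartite-graph matrix of
`G = (U, V; E)` equals the maximum size of a matching of `G` (a set of pairwise
vertex-disjoint edges). -/
theorem bipartite_rank_eq_max_matching {K : Type*} [Field K] {n m : ℕ}
    (E : Finset (Fin n × Fin m)) :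
    IsGreatest
      {k : ℕ | ∃ M : Finset (Fin n × Fin m), M ⊆ E ∧
        (∀ e ∈ M, ∀ f ∈ M, e ≠ f → e.1 ≠ f.1 ∧ e.2 ≠ f.2) ∧ M.card = k}
      (bipartiteMatrix (K := K) E).rank := by
  constructor
  · obtain ⟨f, g, hdet⟩ := (bipartiteMatrix (K := K) E).exists_submatrix_det_ne_zero
    obtain ⟨σ, hσ⟩ := exists_perm_forall_ne_zero_of_det_ne_zero hdet
    exact (exists_matching_card_eq_iff E _).mpr ⟨f ∘ σ, g,
      (injective_of_det_submatrix_ne_zero_left hdet).comp σ.injective,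
      injective_of_det_submatrix_ne_zero_right hdet,
      fun i => mem_of_bipartiteMatrix_ne_zero (hσ i)⟩
  · intro k hk
    obtain ⟨f, g, hf, hg, hE⟩ := (exists_matching_card_eq_iff E k).mp hk
    calc k = ((bipartiteMatrix (K := K) E).submatrix f g).rank := by
          rw [rank_of_det_ne_zero (det_bipartiteMatrix_submatrix_ne_zero (K := K) hf hg hE),
            Fintype.card_fin]
      _ ≤ (bipartiteMatrix (K := K) E).rank := rank_submatrix_le _ _ _
end
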